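/- The set Φ = {φ ∈ Δ : (ψ, φ) > 0} is contained in Δ₊, contains ψ, and has cardinality 2h − 3. -/

import Mathlib

open scoped RealInnerProductSpace

/-- Reflection of a real inner product space in the hyperplane orthogonal to `v`,
i.e. the orthogonal reflection fixing `(ℝ ∙ v)ᗮ` and sending `v` to `-v`. -/
noncomputable def rootReflection {V : Type*} [NormedAddCommGroup V] [InnerProductSpace ℝ V]
    [FiniteDimensional ℝ V] (v : V) : V ≃ₗᵢ[ℝ] V :=
  Submodule.reflection ((ℝ ∙ v)ᗮ)

/-- The orbit of `v` under the cyclic group generated by `σ`. -/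
def cyclicOrbit {V : Type*} [NormedAddCommGroup V] [InnerProductSpace ℝ V]
    (σ : V ≃ₗᵢ[ℝ] V) (v : V) : Set V :=
  {x | ∃ m : ℤ, (σ ^ m) v = x}

/-!
A root `φ ≠ ψ` with `⟪ψ, φ⟫ > 0` has `2 ⟪ψ, φ⟫ = ‖ψ‖²`, by integrality and strict Cauchy–Schwarz;
hence `s_φ ψ = ψ - φ` is a root and maximality of `ψ` makes `φ = ψ - (ψ - φ)` positive.

For the count, the operator `T v = ∑ φ ∈ Δ, ⟪φ, v⟫ • φ` commutes with the reflections, so by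
irreducibility it is a scalar, and its trace `#Δ ‖ψ‖² = h ℓ ‖ψ‖²` makes that scalar `h ‖ψ‖²`.
Thus `∑ φ ∈ Δ, ⟪ψ, φ⟫² = ⟪T ψ, ψ⟫ = h ‖ψ‖⁴`. Since `Δ = -Δ`, the left side is twice the sum over
`Φ`, which is `‖ψ‖⁴ + (#Φ - 1) ‖ψ‖⁴ / 4`; so `#Φ + 3 = 2 h`.
-/

open Finset Module

theorem LinearIndependent.eq_zero_of_eq_sum_of_neg_eq_sum {M ι : Type*} [AddCommGroup M]
    [Module ℝ M] [Fintype ι] {α : ι → M} (hα : LinearIndependent ℝ α) {v : M} {c d : ι → ℝ}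
    (hc : ∀ i, 0 ≤ c i) (hd : ∀ i, 0 ≤ d i) (hv : v = ∑ i, c i • α i)
    (hnv : -v = ∑ i, d i • α i) : v = 0 := by
  have hsum : ∑ i, (c i + d i) • α i = 0 := by
    simp only [add_smul, sum_add_distrib, ← hv, ← hnv, add_neg_cancel]
  have hcd := Fintype.linearIndependent_iff.mp hα _ hsum
  have hc0 : ∀ i, c i = 0 := fun i => by linarith [hcd i, hc i, hd i]
  simp [hv, hc0]

theorem exists_nat_comb_of_two_smul {M ι : Type*} [AddCommGroup M] [Module ℝ M] [Fintype ι]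
    {α : ι → M} (hα : LinearIndependent ℝ α) {ψ : M}
    (hψ : (∃ c : ι → ℕ, ψ = ∑ i, (c i : ℝ) • α i) ∨ (∃ c : ι → ℕ, ψ = -∑ i, (c i : ℝ) • α i))
    (h2ψ : ∃ c : ι → ℕ, ψ - -ψ = ∑ i, (c i : ℝ) • α i) :
    ∃ c : ι → ℕ, ψ = ∑ i, (c i : ℝ) • α i := by
  obtain hpos | ⟨c, hc⟩ := hψ
  · exact hpos
  obtain ⟨d, hd⟩ := h2ψ
  have h2 : ψ + ψ = 0 := by
    refine hα.eq_zero_of_eq_sum_of_neg_eq_sum (c := fun i => (d i : ℝ))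
      (d := fun i => (c i : ℝ) + c i) (fun i => by positivity) (fun i => by positivity)
      (by rw [← hd, sub_neg_eq_add]) ?_
    simp only [add_smul, sum_add_distrib, neg_add, hc, neg_neg]
  refine ⟨0, ?_⟩
  simpa [← two_smul ℝ ψ] using h2

section InnerProductSpace

variable {V : Type*} [NormedAddCommGroup V] [InnerProductSpace ℝ V]

theorem rootReflection_apply [FiniteDimensional ℝ V] (v w : V) :
    rootReflection v w = w - (2 * ⟪v, w⟫ / ⟪v, v⟫) • v := by
  rw [rootReflection, Submodule.reflection_orthogonal_apply,
    Submodule.reflection_singleton_apply, real_inner_self_eq_norm_sq]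
  simp only [RCLike.ofReal_real_eq_id, id_eq]
  rw [two_smul, div_eq_mul_inv, div_eq_mul_inv, mul_assoc, mul_comm ⟪v, w⟫]
  module

theorem rootReflection_apply_self [FiniteDimensional ℝ V] (v : V) : rootReflection v v = -v :=
  Submodule.reflection_orthogonalComplement_singleton_eq_neg v

theorem rootReflection_apply_of_two_mul_inner_eq [FiniteDimensional ℝ V] {v w : V}
    (h : 2 * ⟪v, w⟫ = ⟪v, v⟫) : rootReflection v w = w - v := by
  rcases eq_or_ne v 0 with rfl | hv
  · simp [rootReflection_apply]
  · rw [rootReflection_apply, h, div_self (inner_self_ne_zero.mpr hv), one_smul]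

theorem real_inner_lt_norm_sq_of_norm_eq {x y : V} (hn : ‖x‖ = ‖y‖) (hne : x ≠ y) :
    ⟪x, y⟫ < ‖x‖ ^ 2 := by
  rcases eq_or_ne ‖y‖ 0 with hy | hy
  · exact absurd ((norm_eq_zero.mp (hn.trans hy)).trans (norm_eq_zero.mp hy).symm) hne
  rw [sq]
  nth_rewrite 2 [hn]
  rw [inner_lt_norm_mul_iff_real, hn]
  exact fun h => hne (smul_right_injective V hy h)

theorem two_mul_inner_eq_norm_sq_of_pos {φ ψ : V} (hn : ‖φ‖ = ‖ψ‖) (hne : φ ≠ ψ)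
    (hpos : 0 < ⟪ψ, φ⟫) (hint : ∃ m : ℤ, 2 * ⟪φ, ψ⟫ / ⟪φ, φ⟫ = m) :
    2 * ⟪ψ, φ⟫ = ‖ψ‖ ^ 2 := by
  obtain ⟨m, hm⟩ := hint
  have hlt : ⟪ψ, φ⟫ < ‖ψ‖ ^ 2 := real_inner_lt_norm_sq_of_norm_eq hn.symm hne.symm
  have hr : 0 < ‖ψ‖ ^ 2 := hpos.trans hlt
  rw [real_inner_self_eq_norm_sq, hn, real_inner_comm, div_eq_iff hr.ne'] at hm
  have hm1 : m = 1 := by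
    have h0 : (0 : ℝ) < m := by nlinarith
    have h2 : (m : ℝ) < 2 := by nlinarith
    have : 0 < m ∧ m < 2 := ⟨by exact_mod_cast h0, by exact_mod_cast h2⟩
    omega
  rw [hm, hm1, Int.cast_one, one_mul]

theorem rootReflection_eq_sub_of_inner_pos [FiniteDimensional ℝ V] {φ ψ : V} (hn : ‖φ‖ = ‖ψ‖)
    (hne : φ ≠ ψ) (hpos : 0 < ⟪ψ, φ⟫) (hint : ∃ m : ℤ, 2 * ⟪φ, ψ⟫ / ⟪φ, φ⟫ = m) :
    rootReflection φ ψ = ψ - φ := by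
  refine rootReflection_apply_of_two_mul_inner_eq ?_
  rw [real_inner_comm, two_mul_inner_eq_norm_sq_of_pos hn hne hpos hint,
    real_inner_self_eq_norm_sq, hn]

theorem sum_inner_sq_eq_two_mul_sum_filter_pos {S : Finset V} (hS : ∀ x ∈ S, -x ∈ S) (v : V) :
    ∑ x ∈ S, ⟪v, x⟫ ^ 2 = 2 * ∑ x ∈ S with 0 < ⟪v, x⟫, ⟪v, x⟫ ^ 2 := by
  rw [← sum_filter_add_sum_filter_not S (0 < ⟪v, ·⟫), two_mul, add_right_inj]
  refine sum_bij_ne_zero (fun x _ _ => -x) ?_ (fun _ _ _ _ _ _ => neg_inj.mp) ?_ ?_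
  · intro x hx hx0
    simp only [mem_filter, not_lt] at hx ⊢
    refine ⟨hS x hx.1, ?_⟩
    rw [inner_neg_right, neg_pos]
    exact hx.2.lt_of_ne (by simpa using hx0)
  · intro y hy hy0
    simp only [mem_filter] at hy
    refine ⟨-y, ?_, by simpa using hy0, neg_neg y⟩
    simp only [mem_filter, not_lt, inner_neg_right, neg_nonpos]
    exact ⟨hS y hy.1, hy.2.le⟩
  · simp [inner_neg_right]

noncomputable def outerSum (S : Finset V) : V →ₗ[ℝ] V :=
  ∑ φ ∈ S, (innerₗ V φ).smulRight φ

theorem outerSum_apply (S : Finset V) (v : V) : outerSum S v = ∑ φ ∈ S, ⟪φ, v⟫ • φ := by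
  simp [outerSum]

theorem inner_outerSum_self (S : Finset V) (v : V) :
    ⟪outerSum S v, v⟫ = ∑ φ ∈ S, ⟪φ, v⟫ ^ 2 := by
  simp only [outerSum_apply, sum_inner, real_inner_smul_left, sq]

theorem outerSum_isSymmetric (S : Finset V) : (outerSum S).IsSymmetric := by
  intro x y
  simp only [outerSum_apply, sum_inner, real_inner_smul_left, real_inner_comm _ x]
  exact sum_congr rfl fun _ _ => mul_comm _ _

theorem trace_outerSum [FiniteDimensional ℝ V] (S : Finset V) :
    LinearMap.trace ℝ V (outerSum S) = ∑ φ ∈ S, ‖φ‖ ^ 2 := by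
  simp [outerSum]

theorem outerSum_map_apply {S : Finset V} (g : V ≃ₗᵢ[ℝ] V) (hg : ∀ φ ∈ S, g φ ∈ S) (v : V) :
    outerSum S (g v) = g (outerSum S v) := by
  have hS : S.map g.toEquiv.toEmbedding = S :=
    map_eq_of_subset fun _ hx => by
      obtain ⟨φ, hφ, rfl⟩ := mem_map.mp hx
      exact hg φ hφ
  conv_lhs => rw [outerSum_apply, ← hS, sum_map]
  simp [outerSum_apply, map_sum, LinearIsometryEquiv.inner_map_map]

theorem mem_of_rootReflection_mem [FiniteDimensional ℝ V] {E : Submodule ℝ V} {φ x : V}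
    (hx : x ∈ E) (hφx : rootReflection φ x ∈ E) (hxφ : ⟪φ, x⟫ ≠ 0) : φ ∈ E := by
  have hφ : φ ≠ 0 := by rintro rfl; simp at hxφ
  have hc : 2 * ⟪φ, x⟫ / ⟪φ, φ⟫ ≠ 0 :=
    div_ne_zero (mul_ne_zero two_ne_zero hxφ) (inner_self_ne_zero.mpr hφ)
  have hmem : (2 * ⟪φ, x⟫ / ⟪φ, φ⟫) • φ ∈ E := by
    simpa [rootReflection_apply] using E.sub_mem hx hφx
  exact (E.smul_mem_iff hc).mp hmem

theorem Submodule.eq_top_of_forall_rootReflection_mem [FiniteDimensional ℝ V] {S : Set V}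
    (hspan : Submodule.span ℝ S = ⊤)
    (hirred : ∀ A B : Set V, S = A ∪ B → (∀ a ∈ A, ∀ b ∈ B, ⟪a, b⟫ = 0) → A = ∅ ∨ B = ∅)
    {E : Submodule ℝ V} (hE : E ≠ ⊥) (hinv : ∀ φ ∈ S, ∀ x ∈ E, rootReflection φ x ∈ E) :
    E = ⊤ := by
  have horth : ∀ φ ∈ S, φ ∉ E → ∀ x ∈ E, ⟪x, φ⟫ = 0 := fun φ hφ hφE x hx => by
    by_contra hxφ
    exact hφE (mem_of_rootReflection_mem hx (hinv φ hφ x hx) (by rwa [real_inner_comm]))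
  rcases hirred {φ ∈ S | φ ∈ E} {φ ∈ S | φ ∉ E}
      (by ext φ; simp only [Set.mem_union, Set.mem_ofPred_eq]; tauto)
      (fun a ha b hb => horth b hb.1 hb.2 a ha.2) with hA | hB
  · refine absurd ?_ hE
    rw [eq_bot_iff]
    intro x hx
    have : Submodule.span ℝ S ≤ (ℝ ∙ x)ᗮ :=
      Submodule.span_le.mpr fun φ hφ => by
        refine Submodule.mem_orthogonal_singleton_iff_inner_right.mpr (horth φ hφ ?_ x hx)
        exact fun hφE => (Set.eq_empty_iff_forall_notMem.mp hA) φ ⟨hφ, hφE⟩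
    rw [hspan, top_le_iff, Submodule.orthogonal_eq_top_iff, Submodule.span_singleton_eq_bot] at this
    simp [this]
  · rw [eq_top_iff, ← hspan, Submodule.span_le]
    intro φ hφ
    by_contra hφE
    exact (Set.eq_empty_iff_forall_notMem.mp hB) φ ⟨hφ, hφE⟩

theorem exists_outerSum_eq_smul_id [FiniteDimensional ℝ V] [Nontrivial V] {S : Finset V}
    (hspan : Submodule.span ℝ (S : Set V) = ⊤)
    (hirred : ∀ A B : Set V, (S : Set V) = A ∪ B → (∀ a ∈ A, ∀ b ∈ B, ⟪a, b⟫ = 0) →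
      A = ∅ ∨ B = ∅)
    (hrefl : ∀ φ ∈ S, ∀ θ ∈ S, rootReflection φ θ ∈ S) :
    ∃ μ : ℝ, outerSum S = μ • LinearMap.id := by
  obtain ⟨μ, hμ⟩ : ∃ μ, Module.End.HasEigenvalue (outerSum S) μ :=
    ⟨_, (outerSum_isSymmetric S).hasEigenvalue_iSup_of_finiteDimensional⟩
  have htop : Module.End.eigenspace (outerSum S) μ = ⊤ := by
    refine Submodule.eq_top_of_forall_rootReflection_mem hspan hirred hμ fun φ hφ x hx => ?_
    rw [Module.End.mem_eigenspace_iff] at hx ⊢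
    rw [outerSum_map_apply _ (hrefl φ hφ), hx, map_smul]
  exact ⟨μ, LinearMap.ext fun v => Module.End.mem_eigenspace_iff.mp (htop ▸ Submodule.mem_top)⟩

theorem finrank_mul_sum_inner_sq [FiniteDimensional ℝ V] {S : Finset V}
    (hspan : Submodule.span ℝ (S : Set V) = ⊤)
    (hirred : ∀ A B : Set V, (S : Set V) = A ∪ B → (∀ a ∈ A, ∀ b ∈ B, ⟪a, b⟫ = 0) →
      A = ∅ ∨ B = ∅)
    (hrefl : ∀ φ ∈ S, ∀ θ ∈ S, rootReflection φ θ ∈ S) {r : ℝ} (hnorm : ∀ φ ∈ S, ‖φ‖ = r)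
    (v : V) : finrank ℝ V * ∑ φ ∈ S, ⟪φ, v⟫ ^ 2 = #S * r ^ 2 * ‖v‖ ^ 2 := by
  cases subsingleton_or_nontrivial V
  · simp [Subsingleton.elim v 0]
  obtain ⟨μ, hμ⟩ := exists_outerSum_eq_smul_id hspan hirred hrefl
  have htrace : μ * finrank ℝ V = #S * r ^ 2 := by
    have := trace_outerSum S
    rwa [hμ, map_smul, LinearMap.trace_id, sum_congr rfl fun φ hφ => by rw [hnorm φ hφ],
      sum_const, nsmul_eq_mul, smul_eq_mul] at this
  rw [← inner_outerSum_self, hμ, LinearMap.smul_apply, LinearMap.id_apply, real_inner_smul_left,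
    real_inner_self_eq_norm_sq, ← htrace]
  ring

theorem finrank_eq_card_of_forall_eq_nat_comb {ι : Type*} [Fintype ι] {S : Set V}
    (hspan : Submodule.span ℝ S = ⊤) {α : ι → V} (hα : LinearIndependent ℝ α)
    (hbase : ∀ φ ∈ S, (∃ c : ι → ℕ, φ = ∑ i, (c i : ℝ) • α i) ∨
      (∃ c : ι → ℕ, φ = -∑ i, (c i : ℝ) • α i)) :
    finrank ℝ V = Fintype.card ι := by
  have hcomb : ∀ c : ι → ℕ, ∑ i, (c i : ℝ) • α i ∈ Submodule.span ℝ (Set.range α) :=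
    fun c => Submodule.sum_mem _ fun i _ =>
      Submodule.smul_mem _ _ (Submodule.subset_span ⟨i, rfl⟩)
  have htop : Submodule.span ℝ (Set.range α) = ⊤ := by
    rw [eq_top_iff, ← hspan, Submodule.span_le]
    intro φ hφ
    obtain ⟨c, rfl⟩ | ⟨c, rfl⟩ := hbase φ hφ
    · exact hcomb c
    · exact Submodule.neg_mem _ (hcomb c)
  rw [← finrank_top, ← htop, finrank_span_eq_card hα]

theorem four_mul_sum_filter_pos_inner_sq {S : Finset V} {ψ : V} (hψ : ψ ∈ S) (hψ0 : ψ ≠ 0)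
    (hhalf : ∀ φ ∈ S, 0 < ⟪ψ, φ⟫ → φ ≠ ψ → 2 * ⟪ψ, φ⟫ = ‖ψ‖ ^ 2) :
    4 * ∑ φ ∈ S with 0 < ⟪ψ, φ⟫, ⟪ψ, φ⟫ ^ 2 = (#{φ ∈ S | 0 < ⟪ψ, φ⟫} + 3) * ‖ψ‖ ^ 4 := by
  classical
  have hmem : ψ ∈ {φ ∈ S | 0 < ⟪ψ, φ⟫} := mem_filter.mpr ⟨hψ, real_inner_self_pos.mpr hψ0⟩
  have hrest : ∀ φ ∈ ({φ ∈ S | 0 < ⟪ψ, φ⟫}).erase ψ, ⟪ψ, φ⟫ ^ 2 = ‖ψ‖ ^ 4 / 4 := by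
    intro φ hφ
    obtain ⟨hne, hφ⟩ := mem_erase.mp hφ
    obtain ⟨hφS, hpos⟩ := mem_filter.mp hφ
    have := hhalf φ hφS hpos hne
    nlinarith
  rw [← add_sum_erase _ _ hmem, sum_congr rfl hrest, sum_const, nsmul_eq_mul,
    ← card_erase_add_one hmem, real_inner_self_eq_norm_sq]
  push_cast
  ring

end InnerProductSpace

theorem stmt_6_general
    {V : Type*} [NormedAddCommGroup V] [InnerProductSpace ℝ V] [FiniteDimensional ℝ V]
    (Δ : Finset V)
    -- `Δ` is an irreducible reduced simply-laced root system spanning `V`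
    (hspan : Submodule.span ℝ (Δ : Set V) = ⊤)
    (hzero : (0 : V) ∉ Δ)
    (hrefl : ∀ φ ∈ Δ, ∀ θ ∈ Δ, rootReflection φ θ ∈ Δ)
    (hint : ∀ φ ∈ Δ, ∀ θ ∈ Δ, ∃ m : ℤ, 2 * ⟪φ, θ⟫ / ⟪φ, φ⟫ = (m : ℝ))
    (hlaced : ∀ φ ∈ Δ, ∀ θ ∈ Δ, ‖φ‖ = ‖θ‖)
    (hirred : ∀ A B : Set V, (Δ : Set V) = A ∪ B → (∀ a ∈ A, ∀ b ∈ B, ⟪a, b⟫ = 0) →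
      A = ∅ ∨ B = ∅)
    -- base of simple roots `Π = {α i : i ∈ I}`
    {ι : Type*} [Fintype ι]
    (α : ι → V) (hαind : LinearIndependent ℝ α)
    (hbase : ∀ φ ∈ Δ, (∃ c : ι → ℕ, φ = ∑ i, (c i : ℝ) • α i) ∨
      (∃ c : ι → ℕ, φ = -∑ i, (c i : ℝ) • α i))
    -- the Coxeter number `h = card Δ / ℓ`
    (h : ℕ) (hcox : Δ.card = h * Fintype.card ι)
    -- the positive roots `Δ₊`
    (Δpos : Finset V)
    (hΔpos : ∀ φ, φ ∈ Δpos ↔ φ ∈ Δ ∧ ∃ c : ι → ℕ, φ = ∑ i, (c i : ℝ) • α i)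
    -- the highest root `ψ`
    (ψ : V) (hψmem : ψ ∈ Δ)
    (hψhigh : ∀ φ ∈ Δ, ∃ c : ι → ℕ, ψ - φ = ∑ i, (c i : ℝ) • α i)
    -- the Heisenberg subsystem `Φ`
    (Φ : Set V) (hΦ : Φ = {φ : V | φ ∈ Δ ∧ 0 < ⟪ψ, φ⟫}) :
    Φ ⊆ (Δpos : Set V) ∧ ψ ∈ Φ ∧ Φ.ncard = 2 * h - 3 := by
  have hψ0 : ψ ≠ 0 := ne_of_mem_of_not_mem hψmem hzero
  have hneg : ∀ φ ∈ Δ, -φ ∈ Δ := fun φ hφ => rootReflection_apply_self φ ▸ hrefl φ hφ φ hφ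
  have hΦF : Φ = ↑{φ ∈ Δ | 0 < ⟪ψ, φ⟫} := by ext; simp [hΦ]
  refine ⟨?_, hΦ ▸ ⟨hψmem, real_inner_self_pos.mpr hψ0⟩, ?_⟩
  · rw [hΦ]
    rintro φ ⟨hφΔ, hpos⟩
    refine (hΔpos φ).mpr ⟨hφΔ, ?_⟩
    by_cases hφψ : φ = ψ
    · exact hφψ ▸ exists_nat_comb_of_two_smul hαind (hbase ψ hψmem) (hψhigh _ (hneg ψ hψmem))
    have hsub := hψhigh _ (hrefl φ hφΔ ψ hψmem)
    rwa [rootReflection_eq_sub_of_inner_pos (hlaced φ hφΔ ψ hψmem) hφψ hpos (hint φ hφΔ ψ hψmem),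
      sub_sub_cancel] at hsub
  · have hℓ : finrank ℝ V = Fintype.card ι :=
      finrank_eq_card_of_forall_eq_nat_comb hspan hαind hbase
    have hℓpos : (0 : ℝ) < Fintype.card ι := by
      have : Nontrivial V := ⟨⟨ψ, 0, hψ0⟩⟩
      exact_mod_cast hℓ ▸ finrank_pos
    have hsum := finrank_mul_sum_inner_sq hspan hirred hrefl (fun φ hφ => hlaced φ hφ ψ hψmem) ψ
    simp_rw [real_inner_comm ψ, sum_inner_sq_eq_two_mul_sum_filter_pos hneg ψ, hℓ, hcox] at hsum
    have hcount := four_mul_sum_filter_pos_inner_sq hψmem hψ0 fun φ hφ hpos hne =>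
      two_mul_inner_eq_norm_sq_of_pos (hlaced φ hφ ψ hψmem) hne hpos (hint φ hφ ψ hψmem)
    have hcard : (#{φ ∈ Δ | 0 < ⟪ψ, φ⟫} + 3 : ℝ) = 2 * h := by
      refine mul_right_cancel₀ (mul_pos hℓpos (pow_pos (norm_pos_iff.mpr hψ0) 4)).ne' ?_
      push_cast at hsum
      linear_combination 2 * hsum - Fintype.card ι * hcount
    rw [hΦF, Set.ncard_coe_finset]
    have : #{φ ∈ Δ | 0 < ⟪ψ, φ⟫} + 3 = 2 * h := by exact_mod_cast hcard
    omega

theorem stmt_6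
    {V : Type*} [NormedAddCommGroup V] [InnerProductSpace ℝ V] [FiniteDimensional ℝ V]
    (Δ : Finset V)
    -- `Δ` is an irreducible reduced simply-laced root system spanning `V`
    (hspan : Submodule.span ℝ (Δ : Set V) = ⊤)
    (hzero : (0 : V) ∉ Δ)
    (hreduced : ∀ φ ∈ Δ, ∀ c : ℝ, c • φ ∈ Δ → c = 1 ∨ c = -1)
    (hrefl : ∀ φ ∈ Δ, ∀ θ ∈ Δ, rootReflection φ θ ∈ Δ)
    (hint : ∀ φ ∈ Δ, ∀ θ ∈ Δ, ∃ m : ℤ, 2 * ⟪φ, θ⟫ / ⟪φ, φ⟫ = (m : ℝ))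
    (hlaced : ∀ φ ∈ Δ, ∀ θ ∈ Δ, ‖φ‖ = ‖θ‖)
    (hirred : ∀ A B : Set V, (Δ : Set V) = A ∪ B → (∀ a ∈ A, ∀ b ∈ B, ⟪a, b⟫ = 0) →
      A = ∅ ∨ B = ∅)
    -- base of simple roots `Π = {α i : i ∈ I}`
    {ι : Type*} [Fintype ι] [DecidableEq ι]
    (α : ι → V) (hα : ∀ i, α i ∈ Δ) (hαind : LinearIndependent ℝ α)
    (hbase : ∀ φ ∈ Δ, (∃ c : ι → ℕ, φ = ∑ i, (c i : ℝ) • α i) ∨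
      (∃ c : ι → ℕ, φ = -∑ i, (c i : ℝ) • α i))
    -- the Coxeter number `h = card Δ / ℓ`
    (h : ℕ) (hcox : Δ.card = h * Fintype.card ι)
    -- the positive roots `Δ₊`
    (Δpos : Finset V)
    (hΔpos : ∀ φ, φ ∈ Δpos ↔ φ ∈ Δ ∧ ∃ c : ι → ℕ, φ = ∑ i, (c i : ℝ) • α i)
    -- the highest root `ψ`
    (ψ : V) (hψmem : ψ ∈ Δ)
    (hψhigh : ∀ φ ∈ Δ, ∃ c : ι → ℕ, ψ - φ = ∑ i, (c i : ℝ) • α i)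
    -- the Heisenberg subsystem `Φ`
    (Φ : Set V) (hΦ : Φ = {φ : V | φ ∈ Δ ∧ 0 < ⟪ψ, φ⟫}) :
    Φ ⊆ (Δpos : Set V) ∧ ψ ∈ Φ ∧ Φ.ncard = 2 * h - 3 :=
  stmt_6_general Δ hspan hzero hrefl hint hlaced hirred α hαind hbase h hcox Δpos hΔpos ψ hψmem
    hψhigh Φ hΦ
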